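/- Let a < b be real numbers. Then for every x ∈ ℝ, lim_{ε→0⁺} ∫_a^b erf((x − s)/(√2 ε)) ds = |x − a| − |x − b|, where erf(x) = (2/√π) ∫₀ˣ exp(−t²) dt. -/

import Mathlib

/-! As `ε → 0⁺`, `erf ((x - s) / (√2 ε))` tends to `sign (x - s)` for every `s` (also at `s = x`,
since `erf 0 = 0`), and `|erf| ≤ 1` because `erf` increases from `-1` to `1`. Dominated convergence
turns the limit of the integrals into `∫ₐᵇ sign (x - s) ds`, which equals `|x - a| - |x - b|`
because `s ↦ -|x - s|` is a primitive of `sign (x - s)` away from the single point `s = x`. -/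

/-- The error function `erf x = (2/√π) ∫₀ˣ exp(−t²) dt`. -/
noncomputable def erf (x : ℝ) : ℝ :=
  (2 / Real.sqrt Real.pi) * ∫ t in (0 : ℝ)..x, Real.exp (-t ^ 2)

open MeasureTheory Filter Set Topology

lemma continuous_erf : Continuous erf :=
  continuous_const.mul <| intervalIntegral.continuous_primitive
    (fun _ _ => (by fun_prop : Continuous fun t : ℝ => Real.exp (-t ^ 2)).intervalIntegrable _ _) 0

@[simp] lemma erf_zero : erf 0 = 0 := by simp [erf]

lemma erf_neg (y : ℝ) : erf (-y) = -erf y := by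
  have h := intervalIntegral.integral_comp_neg (a := 0) (b := y) fun t => Real.exp (-t ^ 2)
  simp only [neg_sq, neg_zero] at h
  rw [erf, erf, h, intervalIntegral.integral_symm, mul_neg]

lemma monotone_erf : Monotone erf := by
  intro y z hyz
  rw [erf, erf, ← sub_nonneg, ← mul_sub, intervalIntegral.integral_interval_sub_left]
  · exact mul_nonneg (by positivity)
      (intervalIntegral.integral_nonneg hyz fun t _ => (Real.exp_pos _).le)
  all_goals exact (by fun_prop : Continuous fun t : ℝ => Real.exp (-t ^ 2)).intervalIntegrable _ _

lemma tendsto_erf_atTop : Tendsto erf atTop (𝓝 1) := by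
  have hI := intervalIntegral_tendsto_integral_Ioi 0
    ((integrable_exp_neg_mul_sq one_pos).integrableOn (s := Ioi (0 : ℝ))) tendsto_id
  have hG : ∫ t in Ioi (0 : ℝ), Real.exp (-t ^ 2) = Real.sqrt Real.pi / 2 := by
    simpa using integral_gaussian_Ioi 1
  simp only [neg_mul, one_mul, id, hG] at hI
  have h := hI.const_mul (2 / Real.sqrt Real.pi)
  rwa [show 2 / Real.sqrt Real.pi * (Real.sqrt Real.pi / 2) = 1 by
    field_simp [(Real.sqrt_pos.2 Real.pi_pos).ne']] at h

lemma tendsto_erf_atBot : Tendsto erf atBot (𝓝 (-1)) := by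
  simpa [Function.comp_def, erf_neg] using
    (tendsto_erf_atTop.comp tendsto_neg_atBot_atTop).neg

lemma abs_erf_le_one (y : ℝ) : |erf y| ≤ 1 :=
  abs_le.2 ⟨monotone_erf.le_of_tendsto tendsto_erf_atBot y,
    monotone_erf.ge_of_tendsto tendsto_erf_atTop y⟩

lemma tendsto_erf_div_mul_nhdsGT_zero {c : ℝ} (hc : 0 < c) (y : ℝ) :
    Tendsto (fun ε => erf (y / (c * ε))) (𝓝[>] 0) (𝓝 (SignType.sign y)) := by
  have hdiv : (fun ε => y / (c * ε)) = fun ε => y / c * ε⁻¹ := by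
    funext ε; rw [← div_div, div_eq_mul_inv]
  rcases lt_trichotomy y 0 with hy | rfl | hy
  · have h := (tendsto_inv_nhdsGT_zero (𝕜 := ℝ)).const_mul_atTop_of_neg
      (div_neg_of_neg_of_pos hy hc)
    rw [← hdiv] at h
    simpa [hy, Function.comp_def] using tendsto_erf_atBot.comp h
  · simp
  · have h := (tendsto_inv_nhdsGT_zero (𝕜 := ℝ)).const_mul_atTop (div_pos hy hc)
    rw [← hdiv] at h
    simpa [hy, Function.comp_def] using tendsto_erf_atTop.comp h

lemma monotone_coe_sign : Monotone fun y : ℝ => (SignType.sign y : ℝ) := by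
  intro y z hyz
  rcases lt_trichotomy y 0 with hy | hy | hy <;> rcases lt_trichotomy z 0 with hz | hz | hz <;>
    simp [hy, hz] <;> linarith

lemma integral_sign_sub (a b x : ℝ) :
    ∫ s in a..b, (SignType.sign (x - s) : ℝ) = |x - a| - |x - b| := by
  have hderiv : ∀ s ∈ Ioo (min a b) (max a b) \ {x},
      HasDerivAt (fun s => -|x - s|) (SignType.sign (x - s) : ℝ) s := by
    intro s hs
    have h : HasDerivAt (fun s => |x - s|) (-SignType.sign (x - s) : ℝ) s := by
      simpa [Function.comp_def] using
        (hasDerivAt_abs (sub_ne_zero.2 (Ne.symm hs.2))).comp s ((hasDerivAt_id s).const_sub x)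
    simpa using h.fun_neg
  rw [integral_eq_of_hasDerivAt_off_countable _ _ (countable_singleton x)
    (by fun_prop) hderiv ((monotone_coe_sign.comp_antitone
      fun _ _ h => sub_le_sub_left h x).intervalIntegrable)]
  ring

theorem integral_erf_tendsto_abs_sub_general
    (a b : ℝ) (x : ℝ) :
    Filter.Tendsto
      (fun ε : ℝ => ∫ s in a..b, erf ((x - s) / (Real.sqrt 2 * ε)))
      (nhdsWithin 0 (Set.Ioi 0))
      (nhds (|x - a| - |x - b|)) := by
  rw [← integral_sign_sub]
  refine intervalIntegral.tendsto_integral_filter_of_dominated_convergence (fun _ => 1)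
    (.of_forall fun _ => ?_) (.of_forall fun _ => .of_forall fun _ _ => ?_)
    intervalIntegrable_const (.of_forall fun s _ =>
      tendsto_erf_div_mul_nhdsGT_zero (Real.sqrt_pos.2 two_pos) (x - s))
  · exact (continuous_erf.comp (by fun_prop)).aestronglyMeasurable
  · simpa using abs_erf_le_one _

/-- For `a < b` and every `x ∈ ℝ`,
`lim_{ε→0⁺} ∫_a^b erf((x − s)/(√2 ε)) ds = |x − a| − |x − b|`. -/
theorem integral_erf_tendsto_abs_sub
    (a b : ℝ) (hab : a < b) (x : ℝ) :
    Filter.Tendsto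
      (fun ε : ℝ => ∫ s in a..b, erf ((x - s) / (Real.sqrt 2 * ε)))
      (nhdsWithin 0 (Set.Ioi 0))
      (nhds (|x - a| - |x - b|)) :=
  integral_erf_tendsto_abs_sub_general a b x
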